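/- arXiv:2103.09279 — 2 statements merged into one kernel-verified Lean document; each statement's English description precedes it below -/
import Mathlib

section
/- Let Φ be an n×n complex Hermitian matrix and Ψ an n×n invertible skew-Hermitian matrix (Ψ* = −Ψ). For θ ∈ ℝ set c := cos(θΨ), s := sin(θΨ), D(θ) := c − Φ Ψ⁻¹ s and D'(θ) := −Ψ s − Φ c. Then D(θ) D'(θ)* = D'(θ) D(θ)*. Consequently, if D(θ) is invertible, then the matrix U(θ) := −D(θ)⁻¹ D'(θ) is Hermitian. -/
/-!
Write `D = c - Φ Ψ⁻¹ s` and `D' = -Ψ s - Φ c`. Using `s² = 1 - c²` and that `c`, `s`, `Ψ` commute,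
`D D'* = -c s Ψ + Φ (Ψ⁻¹ s c) Φ + (Φ - c² Φ - Φ c²)`, and each of the three summands is
self-adjoint. Hence `D D'* = (D D'*)* = D' D*`, and for invertible `D` this says
`D⁻¹ D' = D'* D*⁻¹ = (D⁻¹ D')*`.
-/

open Matrix

/-- The matrix cosine `cos M := (exp(iM) + exp(−iM))/2` of a complex square matrix. -/
noncomputable def matCos {n : ℕ} (M : Matrix (Fin n) (Fin n) ℂ) : Matrix (Fin n) (Fin n) ℂ :=
  ((2:ℂ))⁻¹ • (NormedSpace.exp (Complex.I • M) + NormedSpace.exp (-(Complex.I • M)))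

/-- The matrix sine `sin M := (exp(iM) − exp(−iM))/(2i)` of a complex square matrix. -/
noncomputable def matSin {n : ℕ} (M : Matrix (Fin n) (Fin n) ℂ) : Matrix (Fin n) (Fin n) ℂ :=
  (2 * Complex.I)⁻¹ • (NormedSpace.exp (Complex.I • M) - NormedSpace.exp (-(Complex.I • M)))

section MatrixTrig

open NormedSpace Complex

variable {n : ℕ}

theorem Matrix.exp_mul_exp_neg {m 𝔸 : Type*} [Fintype m] [DecidableEq m] [NormedRing 𝔸]
    [NormedAlgebra ℚ 𝔸] [CompleteSpace 𝔸] (A : Matrix m m 𝔸) : exp A * exp (-A) = 1 := by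
  rw [← Matrix.exp_add_of_commute _ _ (Commute.refl A).neg_right, add_neg_cancel,
    NormedSpace.exp_zero]

theorem Matrix.exp_neg_mul_exp {m 𝔸 : Type*} [Fintype m] [DecidableEq m] [NormedRing 𝔸]
    [NormedAlgebra ℚ 𝔸] [CompleteSpace 𝔸] (A : Matrix m m 𝔸) : exp (-A) * exp A = 1 := by
  simpa using Matrix.exp_mul_exp_neg (-A)

theorem matCos_mul_self_add_matSin_mul_self (M : Matrix (Fin n) (Fin n) ℂ) :
    matCos M * matCos M + matSin M * matSin M = 1 := by
  have h2I : ((2 * I)⁻¹ * (2 * I)⁻¹ : ℂ) = -((2 : ℂ)⁻¹ * (2 : ℂ)⁻¹) := by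
    rw [← mul_inv, mul_mul_mul_comm, I_mul_I]
    norm_num
  rw [matCos, matSin, smul_mul_smul_comm, smul_mul_smul_comm, h2I, add_mul, mul_add, mul_add,
    sub_mul, mul_sub, mul_sub, Matrix.exp_mul_exp_neg, Matrix.exp_neg_mul_exp]
  module

theorem Commute.matCos_right {X M : Matrix (Fin n) (Fin n) ℂ} (h : Commute X M) :
    Commute X (matCos M) :=
  have hIM : Commute X (I • M) := h.smul_right I
  (hIM.exp_right.add_right hIM.neg_right.exp_right).smul_right _

theorem Commute.matSin_right {X M : Matrix (Fin n) (Fin n) ℂ} (h : Commute X M) :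
    Commute X (matSin M) :=
  have hIM : Commute X (I • M) := h.smul_right I
  (hIM.exp_right.sub_right hIM.neg_right.exp_right).smul_right _

theorem commute_matCos_matSin (M : Matrix (Fin n) (Fin n) ℂ) : Commute (matCos M) (matSin M) :=
  (Commute.refl M).matCos_right.symm.matSin_right

theorem conjTranspose_I_smul {M : Matrix (Fin n) (Fin n) ℂ} (hM : Mᴴ = -M) :
    (I • M)ᴴ = I • M := by
  rw [conjTranspose_smul, hM, smul_neg, ← neg_smul, star_def, conj_I, neg_neg]

theorem isHermitian_matCos {M : Matrix (Fin n) (Fin n) ℂ} (hM : Mᴴ = -M) :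
    (matCos M).IsHermitian := by
  rw [IsHermitian, matCos, conjTranspose_smul, conjTranspose_add, ← Matrix.exp_conjTranspose,
    ← Matrix.exp_conjTranspose, conjTranspose_neg, conjTranspose_I_smul hM]
  simp

theorem conjTranspose_matSin {M : Matrix (Fin n) (Fin n) ℂ} (hM : Mᴴ = -M) :
    (matSin M)ᴴ = -matSin M := by
  rw [matSin, conjTranspose_smul, conjTranspose_sub, ← Matrix.exp_conjTranspose,
    ← Matrix.exp_conjTranspose, conjTranspose_neg, conjTranspose_I_smul hM, ← neg_smul]
  simp

end MatrixTrig

section StarRing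

variable {R : Type*} [Ring R] [StarRing R]

theorem Units.star_inv_eq_neg {u : Rˣ} (hu : star (u : R) = -u) :
    star (↑u⁻¹ : R) = -↑u⁻¹ := by
  have hu' : star u = -u := Units.ext (by simpa using hu)
  rw [← Units.coe_star_inv, hu']
  simp

theorem isSelfAdjoint_mul_star_of_cos_sin {c s f : R} {u : Rˣ}
    (hc : IsSelfAdjoint c) (hs : star s = -s) (hF : IsSelfAdjoint f) (hu : star (u : R) = -u)
    (hcs : Commute c s) (huc : Commute (u : R) c) (hus : Commute (u : R) s)
    (hpyth : c * c + s * s = 1) :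
    IsSelfAdjoint ((c - f * ↑u⁻¹ * s) * star (-(↑u * s) - f * c)) := by
  have hstar : star (-(↑u * s) - f * c) = -(s * u) - c * f := by
    simp only [star_sub, star_neg, star_mul, hs, hu, hc.star_eq, hF.star_eq]
    noncomm_ring
  have hss : (↑u⁻¹ : R) * (s * s) * u = 1 - c * c := by
    rw [(hus.mul_right hus).units_inv_left.eq, Units.inv_mul_cancel_right, ← hpyth]
    abel
  have hexpand : (c - f * ↑u⁻¹ * s) * star (-(↑u * s) - f * c)
      = -(c * s * u) + f * (↑u⁻¹ * s * c) * star f + (f - c * c * f - f * c * c) :=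
    calc _ = -(c * s * u) - c * c * f + f * (↑u⁻¹ * (s * s) * u) + f * (↑u⁻¹ * s * c) * f := by
          rw [hstar]
          noncomm_ring
      _ = _ := by rw [hss, hF.star_eq]; noncomm_ring
  rw [hexpand]
  refine .add (.add (IsSelfAdjoint.neg ?_) (IsSelfAdjoint.conjugate ?_ f)) ?_
  · rw [IsSelfAdjoint, star_mul, star_mul, hu, hs, hc.star_eq]
    simp only [neg_mul, mul_neg, neg_neg]
    rw [← mul_assoc, hus.eq, mul_assoc, huc.eq, ← mul_assoc, hcs.eq]
  · rw [IsSelfAdjoint, star_mul, star_mul, Units.star_inv_eq_neg hu, hs, hc.star_eq]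
    simp only [neg_mul, mul_neg, neg_neg]
    rw [← mul_assoc, hcs.eq, mul_assoc, ← huc.units_inv_left.eq, ← mul_assoc,
      ← hus.units_inv_left.eq]
  · simp only [IsSelfAdjoint, star_sub, star_mul, hc.star_eq, hF.star_eq]
    noncomm_ring

end StarRing

theorem Matrix.isHermitian_inv_mul_of_isSelfAdjoint {m α : Type*} [Fintype m] [DecidableEq m]
    [CommRing α] [StarRing α] {D E : Matrix m m α} (hD : IsUnit D)
    (h : IsSelfAdjoint (D * Eᴴ)) : (D⁻¹ * E).IsHermitian := by
  have hdet : IsUnit D.det := (isUnit_iff_isUnit_det D).mp hD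
  have hdetH : IsUnit Dᴴ.det := by rw [det_conjTranspose]; exact hdet.star
  have h' : E * Dᴴ = D * Eᴴ := by
    simpa only [star_eq_conjTranspose, conjTranspose_mul, conjTranspose_conjTranspose]
      using h.star_eq
  calc (D⁻¹ * E)ᴴ = Eᴴ * Dᴴ⁻¹ := by rw [conjTranspose_mul, conjTranspose_nonsing_inv]
    _ = D⁻¹ * (D * Eᴴ) * Dᴴ⁻¹ := by rw [nonsing_inv_mul_cancel_left _ _ hdet]
    _ = D⁻¹ * E := by rw [← h', ← mul_assoc, mul_nonsing_inv_cancel_right _ _ hdetH]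

/-- For `Φ` Hermitian and `Ψ` invertible skew-Hermitian, set
`c := cos(θΨ)`, `s := sin(θΨ)`, `D := c − Φ Ψ⁻¹ s`, `D' := −Ψ s − Φ c`. Then
`D D'* = D' D*`, and if `D` is invertible then `U := −D⁻¹ D'` is Hermitian. -/
theorem matD_symmetry_and_U_hermitian {n : ℕ} (Φ Ψ : Matrix (Fin n) (Fin n) ℂ)
    (hΦ : Φ.IsHermitian) (hΨskew : Ψᴴ = -Ψ) (hΨ : IsUnit Ψ) (θ : ℝ) :
    (matCos (θ • Ψ) - Φ * Ψ⁻¹ * matSin (θ • Ψ))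
        * (-(Ψ * matSin (θ • Ψ)) - Φ * matCos (θ • Ψ))ᴴ
      = (-(Ψ * matSin (θ • Ψ)) - Φ * matCos (θ • Ψ))
        * (matCos (θ • Ψ) - Φ * Ψ⁻¹ * matSin (θ • Ψ))ᴴ ∧
    (IsUnit (matCos (θ • Ψ) - Φ * Ψ⁻¹ * matSin (θ • Ψ)) →
      (-((matCos (θ • Ψ) - Φ * Ψ⁻¹ * matSin (θ • Ψ))⁻¹
          * (-(Ψ * matSin (θ • Ψ)) - Φ * matCos (θ • Ψ)))).IsHermitian) := by
  have hskew : (θ • Ψ)ᴴ = -(θ • Ψ) := by rw [conjTranspose_smul, hΨskew, smul_neg]; simp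
  have hΨθ : Commute Ψ (θ • Ψ) := (Commute.refl Ψ).smul_right θ
  have key := isSelfAdjoint_mul_star_of_cos_sin (u := hΨ.unit) (isHermitian_matCos hskew)
    (conjTranspose_matSin hskew) hΦ (by rw [hΨ.unit_spec]; exact hΨskew)
    (commute_matCos_matSin _) hΨθ.matCos_right hΨθ.matSin_right
    (matCos_mul_self_add_matSin_mul_self _)
  rw [coe_units_inv, hΨ.unit_spec, star_eq_conjTranspose] at key
  refine ⟨?_, fun hD => (isHermitian_inv_mul_of_isSelfAdjoint hD key).neg⟩
  simpa only [star_eq_conjTranspose, conjTranspose_mul, conjTranspose_conjTranspose]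
    using key.star_eq.symm
end

section
/- Let T > 0, let A ∈ ℝ^{ν×ν}, Θ ∈ ℝ^{ν×ν} with Θᵀ = −Θ, and S ∈ ℝ^{n×ν}. Define the kernel Λ : ℝ → ℝ^{n×n} by Λ(τ) = S exp(τA) Θ Sᵀ for τ ≥ 0 and Λ(τ) = S Θ exp(−τAᵀ) Sᵀ for τ < 0. For a continuous function f : [0,T] → ℂⁿ, define h₊(t) := ∫₀ᵗ exp((t−τ)A) Θ Sᵀ f(τ) dτ and h₋(t) := ∫ₜᵀ exp((τ−t)Aᵀ) Sᵀ f(τ) dτ. Then (i) ∫₀ᵀ Λ(s−t) f(t) dt = S (h₊(s) + Θ h₋(s)) for all s ∈ [0,T]; (ii) h₊ and h₋ are differentiable on [0,T] with ḣ₊(t) = A h₊(t) + Θ Sᵀ f(t) and ḣ₋(t) = −Aᵀ h₋(t) − Sᵀ f(t); and (iii) h₊(0) = 0 and h₋(T) = 0. -/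
/-!
Both `h₊` and `h₋` are variation-of-constants integrals. Writing `exp((t-τ)A) = exp(tA) exp(-τA)`
turns `h₊(t)` into `exp(tA)` applied to an integral with variable upper limit, so the product
rule and the fundamental theorem of calculus give `ḣ₊ = A h₊ + Θ Sᵀ f`; `h₋` is the same
construction for `-Aᵀ`, run backwards from `T`. For (i), split `∫₀ᵀ` at `t = s`: on `[0, s]` the
kernel is `S exp((s-t)A) Θ Sᵀ` and on `[s, T]` it is `S Θ exp((t-s)Aᵀ) Sᵀ` (the two branches agree
at `t = s`, so the kernel is continuous), which yields `S h₊(s)` and `S Θ h₋(s)`.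

The real matrices are complexified entrywise, which commutes with products and `exp`, and `f` is
replaced by a continuous extension from `[0, T]`, which changes no integral over a subinterval.
-/

open MeasureTheory Matrix Set NormedSpace intervalIntegral

theorem ContinuousOn.exists_continuous_eqOn_Icc {α β : Type*} [LinearOrder α] [TopologicalSpace α]
    [OrderTopology α] [TopologicalSpace β] {f : α → β} {a b : α} (hab : a ≤ b)
    (hf : ContinuousOn f (Icc a b)) : ∃ F : α → β, Continuous F ∧ EqOn F f (Icc a b) :=
  ⟨IccExtend hab ((Icc a b).domRestrict f), continuous_IccExtend_iff.2 hf.domRestrict,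
    fun _ hx => IccExtend_of_mem hab _ hx⟩

namespace Matrix

variable {ι κ μ : Type*} [Fintype ι] [DecidableEq ι]

omit [DecidableEq ι] in
theorem map_ofReal_mul (M : Matrix κ ι ℝ) (N : Matrix ι μ ℝ) :
    (M * N).map ((↑) : ℝ → ℂ) = M.map ((↑) : ℝ → ℂ) * N.map ((↑) : ℝ → ℂ) :=
  Matrix.map_mul (f := Complex.ofRealHom)

omit [Fintype ι] [DecidableEq ι] in
theorem map_ofReal_smul (M : Matrix κ μ ℝ) (t : ℝ) :
    (t • M).map ((↑) : ℝ → ℂ) = t • M.map ((↑) : ℝ → ℂ) := by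
  ext; simp

theorem exp_add_smul (A : Matrix ι ι ℂ) (s t : ℝ) :
    exp ((s + t) • A) = exp (s • A) * exp (t • A) := by
  rw [add_smul]
  exact exp_add_of_commute _ _ (((Commute.refl A).smul_left s).smul_right t)

section LinftyOpNorm

-- `Matrix` has no canonical norm; the statements below do not depend on the norm chosen here.
attribute [local instance] Matrix.linftyOpSemiNormedRing Matrix.linftyOpNormedRing
  Matrix.linftyOpNormedAlgebra Matrix.linftyOpNormedAddCommGroup Matrix.linftyOpNormedSpace

theorem map_ofReal_exp (A : Matrix ι ι ℝ) :
    (exp A).map ((↑) : ℝ → ℂ) = exp (A.map ((↑) : ℝ → ℂ)) :=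
  map_exp (Complex.ofRealHom.mapMatrix (m := ι))
    (continuous_id.matrix_map Complex.continuous_ofReal) A

@[fun_prop]
theorem _root_.Continuous.matrix_exp {X 𝕜 : Type*} [TopologicalSpace X] [RCLike 𝕜]
    {M : X → Matrix ι ι 𝕜} (hM : Continuous M) :
    Continuous fun x => exp (M x) :=
  exp_continuous.comp hM

theorem hasDerivAt_exp_smul_mulVec (A : Matrix ι ι ℂ) {v : ℝ → ι → ℂ} {v' : ι → ℂ} {t : ℝ}
    (hv : HasDerivAt v v' t) :
    HasDerivAt (fun s => exp (s • A) *ᵥ v s)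
      (A *ᵥ (exp (t • A) *ᵥ v t) + exp (t • A) *ᵥ v') t := by
  let mulVecCLM : Matrix ι ι ℂ →L[ℝ] (ι → ℂ) →L[ℝ] ι → ℂ := LinearMap.toContinuousLinearMap
    { toFun M := LinearMap.toContinuousLinearMap (M.mulVecLin.restrictScalars ℝ)
      map_add' M N := by ext; simp
      map_smul' c M := by ext; simp }
  have hexp := mulVecCLM.hasFDerivAt.comp_hasDerivAt t (hasDerivAt_exp_smul_const' A t)
  rw [mulVec_mulVec]
  exact hexp.clm_apply hv

end LinftyOpNorm

omit [DecidableEq ι] in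
theorem intervalIntegral_mulVec [Fintype κ] (M : Matrix κ ι ℂ) {v : ℝ → ι → ℂ} {a b : ℝ}
    (hv : IntervalIntegrable v volume a b) :
    ∫ t in a..b, M *ᵥ v t = M *ᵥ ∫ t in a..b, v t :=
  (LinearMap.toContinuousLinearMap M.mulVecLin).intervalIntegral_comp_comm hv

noncomputable def duhamel (A : Matrix ι ι ℂ) (g : ℝ → ι → ℂ) (a t : ℝ) : ι → ℂ :=
  ∫ τ in a..t, exp ((t - τ) • A) *ᵥ g τ

noncomputable def backwardDuhamel (A : Matrix ι ι ℂ) (g : ℝ → ι → ℂ) (b t : ℝ) : ι → ℂ :=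
  ∫ τ in t..b, exp ((τ - t) • A) *ᵥ g τ

theorem duhamel_eq_exp_smul_mulVec (A : Matrix ι ι ℂ) {g : ℝ → ι → ℂ} (hg : Continuous g)
    (a t : ℝ) : duhamel A g a t = exp (t • A) *ᵥ ∫ τ in a..t, exp ((-τ) • A) *ᵥ g τ := by
  simp_rw [duhamel, sub_eq_add_neg, exp_add_smul, ← mulVec_mulVec]
  have hcont : Continuous fun τ : ℝ => exp ((-τ) • A) *ᵥ g τ := by fun_prop
  exact intervalIntegral_mulVec _ (hcont.intervalIntegrable a t)

theorem hasDerivAt_duhamel (A : Matrix ι ι ℂ) {g : ℝ → ι → ℂ} (hg : Continuous g) (a t : ℝ) :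
    HasDerivAt (duhamel A g a) (A *ᵥ duhamel A g a t + g t) t := by
  have hcont : Continuous fun τ : ℝ => exp ((-τ) • A) *ᵥ g τ := by fun_prop
  have hint := (hcont.integral_hasStrictDerivAt a t).hasDerivAt
  simp_rw [funext (duhamel_eq_exp_smul_mulVec A hg a)]
  refine (hasDerivAt_exp_smul_mulVec A hint).congr_deriv ?_
  rw [mulVec_mulVec (g t), ← exp_add_smul, add_neg_cancel, zero_smul, exp_zero, one_mulVec]

theorem backwardDuhamel_eq_neg_duhamel (A : Matrix ι ι ℂ) (g : ℝ → ι → ℂ) (b t : ℝ) :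
    backwardDuhamel A g b t = -duhamel (-A) g b t := by
  rw [backwardDuhamel, duhamel, integral_symm b t]
  simp_rw [smul_neg, ← neg_smul, neg_sub]

theorem hasDerivAt_backwardDuhamel (A : Matrix ι ι ℂ) {g : ℝ → ι → ℂ} (hg : Continuous g)
    (b t : ℝ) :
    HasDerivAt (backwardDuhamel A g b) (-(A *ᵥ backwardDuhamel A g b t) - g t) t := by
  simp_rw [funext (backwardDuhamel_eq_neg_duhamel A g b)]
  refine (hasDerivAt_duhamel (-A) hg b t).neg.congr_deriv ?_
  rw [neg_mulVec, mulVec_neg]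
  abel

section CommutatorKernel

variable {𝕜 : Type*} [RCLike 𝕜]

noncomputable def commutatorKernel (A Θ : Matrix ι ι 𝕜) (S : Matrix κ ι 𝕜) (τ : ℝ) :
    Matrix κ κ 𝕜 :=
  if 0 ≤ τ then S * exp (τ • A) * Θ * Sᵀ else S * Θ * exp ((-τ) • Aᵀ) * Sᵀ

theorem map_ofReal_commutatorKernel (A Θ : Matrix ι ι ℝ) (S : Matrix κ ι ℝ) (τ : ℝ) :
    (commutatorKernel A Θ S τ).map ((↑) : ℝ → ℂ) = commutatorKernel (A.map ((↑) : ℝ → ℂ))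
      (Θ.map ((↑) : ℝ → ℂ)) (S.map ((↑) : ℝ → ℂ)) τ := by
  unfold commutatorKernel
  split_ifs <;> simp only [map_ofReal_mul, map_ofReal_exp, map_ofReal_smul, transpose_map]

variable (A Θ : Matrix ι ι 𝕜) (S : Matrix κ ι 𝕜) {s t : ℝ}

theorem commutatorKernel_sub_of_le (h : t ≤ s) :
    commutatorKernel A Θ S (s - t) = S * exp ((s - t) • A) * Θ * Sᵀ :=
  if_pos (sub_nonneg.2 h)

theorem commutatorKernel_sub_of_ge (h : s ≤ t) :
    commutatorKernel A Θ S (s - t) = S * Θ * exp ((t - s) • Aᵀ) * Sᵀ := by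
  rcases h.eq_or_lt with rfl | h
  · simp [commutatorKernel]
  · rw [commutatorKernel, if_neg (by linarith), neg_sub]

theorem continuous_commutatorKernel : Continuous (commutatorKernel A Θ S) := by
  refine Continuous.if_le (by fun_prop) (by fun_prop) continuous_const continuous_id fun τ hτ => ?_
  simp [← hτ]

end CommutatorKernel

theorem integral_commutatorKernel_mulVec [Fintype κ] (A Θ : Matrix ι ι ℂ) (S : Matrix κ ι ℂ)
    {s : ℝ} {g : ℝ → κ → ℂ} (hg : Continuous g) {a b : ℝ}
    (has : a ≤ s) (hsb : s ≤ b) :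
    ∫ t in a..b, commutatorKernel A Θ S (s - t) *ᵥ g t =
      S *ᵥ (duhamel A (fun τ => Θ *ᵥ Sᵀ *ᵥ g τ) a s +
        Θ *ᵥ backwardDuhamel Aᵀ (fun τ => Sᵀ *ᵥ g τ) b s) := by
  have hK : Continuous fun t => commutatorKernel A Θ S (s - t) *ᵥ g t :=
    ((continuous_commutatorKernel A Θ S).comp (by fun_prop)).matrix_mulVec hg
  have hleft : ∫ t in a..s, commutatorKernel A Θ S (s - t) *ᵥ g t =
      S *ᵥ duhamel A (fun τ => Θ *ᵥ Sᵀ *ᵥ g τ) a s := by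
    have hcont : Continuous fun τ => exp ((s - τ) • A) *ᵥ Θ *ᵥ Sᵀ *ᵥ g τ := by fun_prop
    rw [duhamel, ← intervalIntegral_mulVec _ (hcont.intervalIntegrable a s)]
    refine integral_congr fun t ht => ?_
    rw [uIcc_of_le has] at ht
    simp only [commutatorKernel_sub_of_le A Θ S ht.2, mulVec_mulVec, Matrix.mul_assoc]
  have hright : ∫ t in s..b, commutatorKernel A Θ S (s - t) *ᵥ g t =
      S *ᵥ Θ *ᵥ backwardDuhamel Aᵀ (fun τ => Sᵀ *ᵥ g τ) b s := by
    have hcont : Continuous fun τ => exp ((τ - s) • Aᵀ) *ᵥ Sᵀ *ᵥ g τ := by fun_prop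
    rw [backwardDuhamel, ← intervalIntegral_mulVec _ (hcont.intervalIntegrable s b),
      ← intervalIntegral_mulVec _ ((continuous_const.matrix_mulVec hcont).intervalIntegrable s b)]
    refine integral_congr fun t ht => ?_
    rw [uIcc_of_le hsb] at ht
    simp only [commutatorKernel_sub_of_ge A Θ S ht.1, mulVec_mulVec, Matrix.mul_assoc]
  rw [← integral_add_adjacent_intervals (hK.intervalIntegrable a s) (hK.intervalIntegrable s b),
    hleft, hright, mulVec_add]

end Matrix

theorem oqho_kernel_boundary_value_problem_general {ν n : ℕ} (T : ℝ) (hT : 0 < T)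
    (A Θ : Matrix (Fin ν) (Fin ν) ℝ)
    (S : Matrix (Fin n) (Fin ν) ℝ)
    (f : ℝ → Fin n → ℂ) (hf : ContinuousOn f (Set.Icc 0 T))
    (Λ : ℝ → Matrix (Fin n) (Fin n) ℝ)
    (hΛ : ∀ τ : ℝ, Λ τ =
      if 0 ≤ τ then S * NormedSpace.exp (τ • A) * Θ * Sᵀ
      else S * Θ * NormedSpace.exp ((-τ) • Aᵀ) * Sᵀ)
    (hplus hminus : ℝ → Fin ν → ℂ)
    (hp : ∀ t : ℝ, hplus t =
      ∫ τ in (0:ℝ)..t, ((NormedSpace.exp ((t - τ) • A) * Θ * Sᵀ).map ((↑) : ℝ → ℂ)) *ᵥ f τ)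
    (hm : ∀ t : ℝ, hminus t =
      ∫ τ in t..T, ((NormedSpace.exp ((τ - t) • Aᵀ) * Sᵀ).map ((↑) : ℝ → ℂ)) *ᵥ f τ) :
    (∀ s ∈ Set.Icc (0:ℝ) T,
      (∫ t in (0:ℝ)..T, ((Λ (s - t)).map ((↑) : ℝ → ℂ)) *ᵥ f t)
        = (S.map ((↑) : ℝ → ℂ)) *ᵥ (hplus s + (Θ.map ((↑) : ℝ → ℂ)) *ᵥ hminus s)) ∧
    (∀ t ∈ Set.Icc (0:ℝ) T,
      HasDerivWithinAt hplus
        ((A.map ((↑) : ℝ → ℂ)) *ᵥ hplus t + ((Θ * Sᵀ).map ((↑) : ℝ → ℂ)) *ᵥ f t)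
        (Set.Icc 0 T) t ∧
      HasDerivWithinAt hminus
        (-((Aᵀ.map ((↑) : ℝ → ℂ)) *ᵥ hminus t) - (Sᵀ.map ((↑) : ℝ → ℂ)) *ᵥ f t)
        (Set.Icc 0 T) t) ∧
    hplus 0 = 0 ∧ hminus T = 0 := by
  obtain ⟨F, hF, hFf⟩ := hf.exists_continuous_eqOn_Icc hT.le
  obtain rfl : Λ = commutatorKernel A Θ S := funext hΛ
  have h0 : (0 : ℝ) ∈ Icc 0 T := left_mem_Icc.2 hT.le
  have hT' : T ∈ Icc 0 T := right_mem_Icc.2 hT.le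
  simp only [Matrix.mul_assoc, map_ofReal_mul, map_ofReal_exp, map_ofReal_smul, transpose_map,
    map_ofReal_commutatorKernel, ← mulVec_mulVec] at hp hm ⊢
  have hplusF : EqOn hplus (duhamel (A.map ((↑) : ℝ → ℂ))
      (fun τ => Θ.map ((↑) : ℝ → ℂ) *ᵥ (S.map ((↑) : ℝ → ℂ))ᵀ *ᵥ F τ) 0) (Icc 0 T) :=
    fun t ht => (hp t).trans <| integral_congr fun τ hτ => by
      simp only [hFf (uIcc_subset_Icc h0 ht hτ)]
  have hminusF : EqOn hminus (backwardDuhamel (A.map ((↑) : ℝ → ℂ))ᵀ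
      (fun τ => (S.map ((↑) : ℝ → ℂ))ᵀ *ᵥ F τ) T) (Icc 0 T) :=
    fun t ht => (hm t).trans <| integral_congr fun τ hτ => by
      simp only [hFf (uIcc_subset_Icc ht hT' hτ)]
  refine ⟨fun s hs => ?_, fun t ht => ⟨?_, ?_⟩, by simp [hp], by simp [hm]⟩
  · rw [hplusF hs, hminusF hs, ← integral_commutatorKernel_mulVec _ _ _ hF hs.1 hs.2]
    exact integral_congr fun t ht => by simp only [hFf (uIcc_subset_Icc h0 hT' ht)]
  · rw [hplusF ht, ← hFf ht]
    exact (hasDerivAt_duhamel _ (by fun_prop) 0 t).hasDerivWithinAt.congr hplusF (hplusF ht)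
  · rw [hminusF ht, ← hFf ht]
    exact (hasDerivAt_backwardDuhamel _ (by fun_prop) T t).hasDerivWithinAt.congr hminusF
      (hminusF ht)

/-- For the commutator kernel `Λ` of an open quantum harmonic oscillator
(with antisymmetric CCR matrix `Θ`, dynamics matrix `A` and weighting matrix `S`) and a
continuous `f : [0,T] → ℂⁿ`, the functions
`h₊(t) = ∫₀ᵗ exp((t−τ)A) Θ Sᵀ f(τ) dτ` and `h₋(t) = ∫ₜᵀ exp((τ−t)Aᵀ) Sᵀ f(τ) dτ`
satisfy: (i) `∫₀ᵀ Λ(s−t) f(t) dt = S (h₊(s) + Θ h₋(s))` on `[0,T]`;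
(ii) `ḣ₊ = A h₊ + Θ Sᵀ f` and `ḣ₋ = −Aᵀ h₋ − Sᵀ f` on `[0,T]`;
(iii) `h₊(0) = 0` and `h₋(T) = 0`. -/
theorem oqho_kernel_boundary_value_problem {ν n : ℕ} (T : ℝ) (hT : 0 < T)
    (A Θ : Matrix (Fin ν) (Fin ν) ℝ) (hΘ : Θᵀ = -Θ)
    (S : Matrix (Fin n) (Fin ν) ℝ)
    (f : ℝ → Fin n → ℂ) (hf : ContinuousOn f (Set.Icc 0 T))
    (Λ : ℝ → Matrix (Fin n) (Fin n) ℝ)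
    (hΛ : ∀ τ : ℝ, Λ τ =
      if 0 ≤ τ then S * NormedSpace.exp (τ • A) * Θ * Sᵀ
      else S * Θ * NormedSpace.exp ((-τ) • Aᵀ) * Sᵀ)
    (hplus hminus : ℝ → Fin ν → ℂ)
    (hp : ∀ t : ℝ, hplus t =
      ∫ τ in (0:ℝ)..t, ((NormedSpace.exp ((t - τ) • A) * Θ * Sᵀ).map ((↑) : ℝ → ℂ)) *ᵥ f τ)
    (hm : ∀ t : ℝ, hminus t =
      ∫ τ in t..T, ((NormedSpace.exp ((τ - t) • Aᵀ) * Sᵀ).map ((↑) : ℝ → ℂ)) *ᵥ f τ) :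
    (∀ s ∈ Set.Icc (0:ℝ) T,
      (∫ t in (0:ℝ)..T, ((Λ (s - t)).map ((↑) : ℝ → ℂ)) *ᵥ f t)
        = (S.map ((↑) : ℝ → ℂ)) *ᵥ (hplus s + (Θ.map ((↑) : ℝ → ℂ)) *ᵥ hminus s)) ∧
    (∀ t ∈ Set.Icc (0:ℝ) T,
      HasDerivWithinAt hplus
        ((A.map ((↑) : ℝ → ℂ)) *ᵥ hplus t + ((Θ * Sᵀ).map ((↑) : ℝ → ℂ)) *ᵥ f t)
        (Set.Icc 0 T) t ∧
      HasDerivWithinAt hminus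
        (-((Aᵀ.map ((↑) : ℝ → ℂ)) *ᵥ hminus t) - (Sᵀ.map ((↑) : ℝ → ℂ)) *ᵥ f t)
        (Set.Icc 0 T) t) ∧
    hplus 0 = 0 ∧ hminus T = 0 :=
  oqho_kernel_boundary_value_problem_general T hT A Θ S f hf Λ hΛ hplus hminus hp hm
end
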